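/- For every p > 1 and all real a₁, a₂, b₁, b₂, ε: F_ε(min(a₁,a₂), min(b₁,b₂)) ≤ max(F_ε(a₁,b₁), F_ε(a₂,b₂)). -/

import Mathlib

noncomputable def Fe (p ε a b : ℝ) : ℝ :=
  (b ^ 2 + ε ^ 2) ^ (p / 2) - (a ^ 2 + ε ^ 2) ^ (p / 2)
    - p * a * (a ^ 2 + ε ^ 2) ^ ((p - 2) / 2) * (b - a)

/-!
`F_ε` is the Bregman divergence of the convex `C¹` function `φ(x) = (x² + ε²)^(p/2) = ‖x + εi‖^p`.
For any convex differentiable `φ`, the divergence `D(a, b)` grows in `b` on `b ≥ a` and in `a` on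
`a ≥ b`. So if, say, `a₁ ≤ a₂` and `b₂ ≤ b₁`, then `D(a₁, b₂) ≤ D(a₁, b₁)` when `a₁ ≤ b₂`, and
`D(a₁, b₂) ≤ D(a₂, b₂)` when `b₂ ≤ a₁`.
-/

open Set Complex

def bregman (f f' : ℝ → ℝ) (a b : ℝ) : ℝ := f b - f a - f' a * (b - a)

section Bregman

variable {f f' : ℝ → ℝ}

theorem bregman_nonneg (hf : ConvexOn ℝ univ f) (hf' : ∀ x, HasDerivAt f (f' x) x) (a b : ℝ) :
    0 ≤ bregman f f' a b := by
  rcases lt_trichotomy a b with hab | rfl | hba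
  · have h := hf.le_slope_of_hasDerivAt (mem_univ a) (mem_univ b) hab (hf' a)
    rw [slope_def_field, le_div_iff₀ (sub_pos.2 hab)] at h
    unfold bregman; linarith
  · simp [bregman]
  · have h := hf.slope_le_of_hasDerivAt (mem_univ b) (mem_univ a) hba (hf' a)
    rw [slope_def_field, div_le_iff₀ (sub_pos.2 hba)] at h
    unfold bregman; linarith

theorem ConvexOn.monotone_of_hasDerivAt (hf : ConvexOn ℝ univ f)
    (hf' : ∀ x, HasDerivAt f (f' x) x) : Monotone f' := by
  intro x y hxy
  rcases hxy.eq_or_lt with rfl | hxy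
  · rfl
  exact (hf.le_slope_of_hasDerivAt (mem_univ x) (mem_univ y) hxy (hf' x)).trans
    (hf.slope_le_of_hasDerivAt (mem_univ x) (mem_univ y) hxy (hf' y))

theorem bregman_le_bregman_right (hf : ConvexOn ℝ univ f) (hf' : ∀ x, HasDerivAt f (f' x) x)
    {a b b' : ℝ} (hab : a ≤ b) (hbb' : b ≤ b') : bregman f f' a b ≤ bregman f f' a b' := by
  have hD := bregman_nonneg hf hf' b b'
  have hmono := mul_le_mul_of_nonneg_right (hf.monotone_of_hasDerivAt hf' hab) (sub_nonneg.2 hbb')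
  unfold bregman at *
  linarith

theorem bregman_le_bregman_left (hf : ConvexOn ℝ univ f) (hf' : ∀ x, HasDerivAt f (f' x) x)
    {a a' b : ℝ} (hba : b ≤ a) (haa' : a ≤ a') : bregman f f' a b ≤ bregman f f' a' b := by
  -- `D(a', b) - D(a, b) = D(a', a) + (f' a' - f' a) (a - b)`
  have hD := bregman_nonneg hf hf' a' a
  have hmono := mul_le_mul_of_nonneg_right (hf.monotone_of_hasDerivAt hf' haa') (sub_nonneg.2 hba)
  unfold bregman at *
  linarith

theorem bregman_min_le_max_of_le (hf : ConvexOn ℝ univ f) (hf' : ∀ x, HasDerivAt f (f' x) x)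
    {a₁ a₂ : ℝ} (b₁ b₂ : ℝ) (ha : a₁ ≤ a₂) :
    bregman f f' a₁ (min b₁ b₂) ≤ max (bregman f f' a₁ b₁) (bregman f f' a₂ b₂) := by
  rcases le_total b₁ b₂ with hb | hb
  · rw [min_eq_left hb]
    exact le_max_left _ _
  rw [min_eq_right hb]
  rcases le_total a₁ b₂ with hab | hba
  · exact (bregman_le_bregman_right hf hf' hab hb).trans (le_max_left _ _)
  · exact (bregman_le_bregman_left hf hf' hba ha).trans (le_max_right _ _)

theorem bregman_min_le_max (hf : ConvexOn ℝ univ f) (hf' : ∀ x, HasDerivAt f (f' x) x)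
    (a₁ a₂ b₁ b₂ : ℝ) :
    bregman f f' (min a₁ a₂) (min b₁ b₂) ≤ max (bregman f f' a₁ b₁) (bregman f f' a₂ b₂) := by
  rcases le_total a₁ a₂ with ha | ha
  · rw [min_eq_left ha]
    exact bregman_min_le_max_of_le hf hf' b₁ b₂ ha
  · rw [min_eq_right ha, min_comm b₁, max_comm]
    exact bregman_min_le_max_of_le hf hf' b₂ b₁ ha

end Bregman

theorem ConvexOn.rpow {s : Set ℝ} {g : ℝ → ℝ} (hg : ConvexOn ℝ s g) (hg₀ : ∀ x ∈ s, 0 ≤ g x)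
    {p : ℝ} (hp : 1 ≤ p) : ConvexOn ℝ s fun x ↦ g x ^ p := by
  refine ⟨hg.1, fun x hx y hy a b ha hb hab ↦ ?_⟩
  calc g (a • x + b • y) ^ p ≤ (a • g x + b • g y) ^ p :=
        Real.rpow_le_rpow (hg₀ _ (hg.1 hx hy ha hb hab)) (hg.2 hx hy ha hb hab) (by linarith)
    _ ≤ a • g x ^ p + b • g y ^ p :=
        (convexOn_rpow hp).2 (hg₀ x hx) (hg₀ y hy) ha hb hab

theorem norm_ofReal_add_mul_I_rpow (x y q : ℝ) :
    ‖(x + y * I : ℂ)‖ ^ q = (x ^ 2 + y ^ 2) ^ (q / 2) := by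
  rw [norm_add_mul_I, Real.sqrt_eq_rpow, ← Real.rpow_mul (by positivity)]
  ring_nf

theorem convexOn_rpow_sq_add_sq {p : ℝ} (hp : 1 ≤ p) (ε : ℝ) :
    ConvexOn ℝ univ fun x : ℝ ↦ (x ^ 2 + ε ^ 2) ^ (p / 2) := by
  have hnorm : ConvexOn ℝ univ fun x : ℝ ↦ ‖(x + ε * I : ℂ)‖ := by
    have h := convexOn_univ_norm.comp_affineMap (AffineMap.lineMap (ε * I : ℂ) (1 + ε * I))
    rw [preimage_univ] at h
    refine h.congr fun x _ ↦ ?_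
    simp [AffineMap.lineMap_apply]
  simpa only [norm_ofReal_add_mul_I_rpow] using hnorm.rpow (fun x _ ↦ norm_nonneg _) hp

theorem hasDerivAt_rpow_sq_add_sq {p : ℝ} (hp : 1 < p) (ε x : ℝ) :
    HasDerivAt (fun x : ℝ ↦ (x ^ 2 + ε ^ 2) ^ (p / 2))
      (p * x * (x ^ 2 + ε ^ 2) ^ ((p - 2) / 2)) x := by
  have h := (hasFDerivAt_norm_rpow (x + ε * I : ℂ) hp).comp_hasDerivAt x
    ((hasDerivAt_id x).ofReal_comp.add_const (ε * I : ℂ))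
  simp only [Function.comp_def, id, norm_ofReal_add_mul_I_rpow] at h
  refine h.congr_deriv ?_
  simp [Complex.inner]
  ring

theorem Fe_eq_bregman (p ε a b : ℝ) :
    Fe p ε a b = bregman (fun x ↦ (x ^ 2 + ε ^ 2) ^ (p / 2))
      (fun x ↦ p * x * (x ^ 2 + ε ^ 2) ^ ((p - 2) / 2)) a b :=
  rfl

theorem Fe_min (p : ℝ) (hp : 1 < p) (ε a₁ a₂ b₁ b₂ : ℝ) :
    Fe p ε (min a₁ a₂) (min b₁ b₂) ≤ max (Fe p ε a₁ b₁) (Fe p ε a₂ b₂) := by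
  simp only [Fe_eq_bregman]
  exact bregman_min_le_max (convexOn_rpow_sq_add_sq hp.le ε) (hasDerivAt_rpow_sq_add_sq hp ε)
    a₁ a₂ b₁ b₂
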